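/- Let G be a graph, C a chordless cycle in G of length at least 5, and H a subgraph of G vertex-disjoint from C such that the family containing C among k−1 disjoint cycles is minimal. Then every vertex v ∈ V(H) has at most one neighbor on C, so the number of edges between H and C is at most |V(H)|. -/

import Mathlib

/-! If a vertex `x` outside all the cycles had two neighbours `a ≠ b` on `C`, the shorter of the
two `a`–`b` arcs of `C` has length at most `|C| / 2`; closing it up through `x` gives a cycle of
length at most `|C| / 2 + 2`, which is less than `|C|` once `|C| ≥ 5`. This cycle meets no other
cycle of the family, so swapping it in for `C` contradicts minimality. -/

/-- A family of `k` pairwise vertex-disjoint cycles in `G`. -/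
def CycleFamily {V : Type*} (G : SimpleGraph V) (k : ℕ)
    (f : Fin k → Σ v : V, G.Walk v v) : Prop :=
  (∀ i, (f i).2.IsCycle) ∧
  ∀ i j, i ≠ j → ∀ v : V, v ∈ (f i).2.support → v ∉ (f j).2.support

/-- The total number of vertices covered by a family of cycles. -/
def famCard {V : Type*} [DecidableEq V] {G : SimpleGraph V} {k : ℕ}
    (f : Fin k → Σ v : V, G.Walk v v) : ℕ :=
  (Finset.univ.biUnion fun i : Fin k => (f i).2.support.toFinset).card

open Finset SimpleGraph

namespace SimpleGraph.Walk

variable {V : Type*} {G : SimpleGraph V}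

lemma IsCycle.card_support_toFinset [DecidableEq V] {v : V} {c : G.Walk v v} (hc : c.IsCycle) :
    #c.support.toFinset = c.length := by
  rw [← c.cons_tail_support, List.toFinset_cons,
    Finset.insert_eq_of_mem (List.mem_toFinset.mpr (c.end_mem_tail_support hc.not_nil)),
    List.toFinset_card_of_nodup hc.support_nodup, List.length_tail, length_support]
  rfl

lemma IsCycle.exists_isPath_two_mul_length_le [DecidableEq V] {v a b : V} {c : G.Walk v v}
    (hc : c.IsCycle) (ha : a ∈ c.support) (hb : b ∈ c.support) (hab : a ≠ b) :
    ∃ r : G.Walk a b, r.IsPath ∧ r.support ⊆ c.support ∧ 2 * r.length ≤ c.length := by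
  set c' := c.rotate a ha
  have hc' : c'.IsCycle := hc.rotate ha
  have hsub : c'.support ⊆ c.support := fun w => (c.mem_support_rotate_iff a ha).mp
  have hb' : b ∈ c'.support := (c.mem_support_rotate_iff a ha).mpr hb
  set p := c'.takeUntil b hb'
  set q := c'.dropUntil b hb'
  have hpq : p.append q = c' := c'.take_spec hb'
  have hlen : p.length + q.length = c.length := by
    rw [← length_append, hpq, length_rotate]
  rcases le_or_gt (2 * p.length) c.length with hp | hp
  · exact ⟨p, hc'.isPath_takeUntil hb',
      List.Subset.trans (c'.support_takeUntil_subset_support hb') hsub, hp⟩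
  · refine ⟨q.reverse, ?_, ?_, by rw [length_reverse]; omega⟩
    · exact isPath_reverse_iff q |>.mpr <|
        (hpq ▸ hc').isPath_of_append_right (not_nil_of_ne hab)
    · rw [support_reverse]
      exact List.reverse_subset.mpr
        (List.Subset.trans (c'.support_dropUntil_subset_support hb') hsub)

lemma IsPath.isCycle_cons_concat {x a b : V} {r : G.Walk a b} (hr : r.IsPath) (hab : a ≠ b)
    (hx : x ∉ r.support) (hxa : G.Adj x a) (hbx : G.Adj b x) :
    (cons hxa (r.concat hbx)).IsCycle := by
  refine (cons_isCycle_iff _ _).mpr ⟨hr.concat hx hbx, fun he => ?_⟩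
  rw [edges_concat, List.concat_eq_append, List.mem_append, List.mem_singleton,
    Sym2.eq_iff] at he
  rcases he with he | ⟨rfl, -⟩ | ⟨-, rfl⟩
  · exact hx (r.fst_mem_support_of_mem_edges he)
  · exact hx r.end_mem_support
  · exact hab rfl

lemma IsCycle.exists_isCycle_through_of_adj_of_adj [DecidableEq V] {v x a b : V}
    {c : G.Walk v v} (hc : c.IsCycle) (hx : x ∉ c.support) (ha : a ∈ c.support)
    (hb : b ∈ c.support) (hab : a ≠ b) (hxa : G.Adj x a) (hxb : G.Adj x b) :
    ∃ D : G.Walk x x, D.IsCycle ∧ D.support ⊆ x :: c.support ∧ 2 * D.length ≤ c.length + 4 := by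
  obtain ⟨r, hr, hrc, hrlen⟩ := hc.exists_isPath_two_mul_length_le ha hb hab
  refine ⟨cons hxa (r.concat hxb.symm), hr.isCycle_cons_concat hab (fun h => hx (hrc h)) _ _,
    ?_, by simp only [length_cons, length_concat]; omega⟩
  intro w hw
  simp only [support_cons, support_concat, List.mem_cons, List.mem_append, List.not_mem_nil,
    or_false] at hw ⊢
  rcases hw with rfl | hw | rfl
  · exact .inl rfl
  · exact .inr (hrc hw)
  · exact .inl rfl

end SimpleGraph.Walk

namespace CycleFamily

variable {V : Type*} {G : SimpleGraph V} {k : ℕ} {f : Fin k → Σ v : V, G.Walk v v}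

lemma famCard_eq_sum_length [DecidableEq V] (hf : CycleFamily G k f) :
    famCard f = ∑ i, (f i).2.length := by
  rw [famCard, card_biUnion fun i _ j _ hij => List.disjoint_toFinset_iff_disjoint.mpr
    fun w hi hj => hf.2 i j hij w hi hj]
  exact sum_congr rfl fun i _ => (hf.1 i).card_support_toFinset

lemma update (hf : CycleFamily G k f) (i₀ : Fin k) {v : V} {D : G.Walk v v} (hD : D.IsCycle)
    (hDf : ∀ w ∈ D.support, ∀ j ≠ i₀, w ∉ (f j).2.support) :
    CycleFamily G k (Function.update f i₀ ⟨v, D⟩) := by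
  refine ⟨fun i => ?_, fun i j hij w hi hj => ?_⟩
  · rcases eq_or_ne i i₀ with rfl | hi
    · rw [Function.update_self]
      exact hD
    · rw [Function.update_of_ne hi]
      exact hf.1 i
  · rcases eq_or_ne i i₀ with rfl | hi₀
    · rw [Function.update_self] at hi
      rw [Function.update_of_ne hij.symm] at hj
      exact hDf w hi j hij.symm hj
    rw [Function.update_of_ne hi₀] at hi
    rcases eq_or_ne j i₀ with rfl | hj₀
    · rw [Function.update_self] at hj
      exact hDf w hj i hij hi
    · rw [Function.update_of_ne hj₀] at hj
      exact hf.2 i j hij w hi hj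

lemma length_le_of_minimal [Fintype V] [DecidableEq V] (hf : CycleFamily G k f)
    (hmin : ∀ g, CycleFamily G k g → famCard f ≤ famCard g) (i₀ : Fin k) {v : V}
    {D : G.Walk v v} (hD : D.IsCycle) (hDf : ∀ w ∈ D.support, ∀ j ≠ i₀, w ∉ (f j).2.support) :
    (f i₀).2.length ≤ D.length := by
  have hg := hf.update i₀ hD hDf
  have hle := hmin _ hg
  have hrest : ∑ i ∈ univ.erase i₀, (Function.update f i₀ ⟨v, D⟩ i).2.length =
      ∑ i ∈ univ.erase i₀, (f i).2.length :=
    sum_congr rfl fun i hi => by rw [Function.update_of_ne (ne_of_mem_erase hi)]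
  rw [hf.famCard_eq_sum_length, hg.famCard_eq_sum_length, ← add_sum_erase _ _ (mem_univ i₀),
    ← add_sum_erase _ _ (mem_univ i₀), hrest, Function.update_self] at hle
  exact le_of_add_le_add_right hle

theorem card_filter_adj_le_one [Fintype V] [DecidableEq V] [DecidableRel G.Adj]
    (hf : CycleFamily G k f) (hmin : ∀ g, CycleFamily G k g → famCard f ≤ famCard g)
    {i₀ : Fin k} (hlen : 5 ≤ (f i₀).2.length) {x : V} (hx : ∀ i, x ∉ (f i).2.support) :
    #((f i₀).2.support.toFinset.filter (G.Adj x)) ≤ 1 := by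
  by_contra! h
  obtain ⟨a, ha, b, hb, hab⟩ := one_lt_card.mp h
  simp only [mem_filter, List.mem_toFinset] at ha hb
  obtain ⟨D, hD, hDsupp, hDlen⟩ :=
    (hf.1 i₀).exists_isCycle_through_of_adj_of_adj (hx i₀) ha.1 hb.1 hab ha.2 hb.2
  have hDf : ∀ w ∈ D.support, ∀ j ≠ i₀, w ∉ (f j).2.support := fun w hw j hj => by
    rcases List.mem_cons.mp (hDsupp hw) with rfl | hw
    · exact hx j
    · exact hf.2 i₀ j hj.symm w hw
  have := hf.length_le_of_minimal hmin i₀ hD hDf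
  omega

end CycleFamily

theorem long_cycle_few_edges_general {V : Type*} [Fintype V] [DecidableEq V]
    (G : SimpleGraph V) [DecidableRel G.Adj]
    (k : ℕ) (f : Fin k → Σ v : V, G.Walk v v)
    (hf : CycleFamily G k f)
    (hmin : ∀ g : Fin k → Σ v : V, G.Walk v v, CycleFamily G k g → famCard f ≤ famCard g)
    (i₀ : Fin k) (hlen : 5 ≤ (f i₀).2.length) :
    (∀ x : V, (∀ i, x ∉ (f i).2.support) →
      ((f i₀).2.support.toFinset.filter (G.Adj x)).card ≤ 1) ∧
    ∑ x ∈ Finset.univ.filter (fun x : V => ∀ i, x ∉ (f i).2.support),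
        ((f i₀).2.support.toFinset.filter (G.Adj x)).card ≤
      (Finset.univ.filter (fun x : V => ∀ i, x ∉ (f i).2.support)).card := by
  have key : ∀ x : V, (∀ i, x ∉ (f i).2.support) →
      ((f i₀).2.support.toFinset.filter (G.Adj x)).card ≤ 1 :=
    fun x hx => hf.card_filter_adj_le_one hmin hlen hx
  refine ⟨key, ?_⟩
  simpa using sum_le_card_nsmul _ _ 1 fun x hx => key x (mem_filter.mp hx).2

/-- Consequence of Lemma 1 used in Case 2: if `C` is a chordless cycle of length at
least 5 in a minimal family of disjoint cycles and `H` is the set of vertices outside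
all the cycles, then every vertex of `H` has at most one neighbor on `C`, and hence
`e(H, C) ≤ |H|`. -/
theorem long_cycle_few_edges {V : Type*} [Fintype V] [DecidableEq V]
    (G : SimpleGraph V) [DecidableRel G.Adj]
    (k : ℕ) (f : Fin k → Σ v : V, G.Walk v v)
    (hf : CycleFamily G k f)
    (hmin : ∀ g : Fin k → Σ v : V, G.Walk v v, CycleFamily G k g → famCard f ≤ famCard g)
    (i₀ : Fin k) (hlen : 5 ≤ (f i₀).2.length)
    (hchordless : ∀ u₁ u₂ : V, u₁ ∈ (f i₀).2.support → u₂ ∈ (f i₀).2.support →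
      G.Adj u₁ u₂ → (f i₀).2.toSubgraph.Adj u₁ u₂) :
    (∀ x : V, (∀ i, x ∉ (f i).2.support) →
      ((f i₀).2.support.toFinset.filter (G.Adj x)).card ≤ 1) ∧
    ∑ x ∈ Finset.univ.filter (fun x : V => ∀ i, x ∉ (f i).2.support),
        ((f i₀).2.support.toFinset.filter (G.Adj x)).card ≤
      (Finset.univ.filter (fun x : V => ∀ i, x ∉ (f i).2.support)).card :=
  long_cycle_few_edges_general G k f hf hmin i₀ hlen
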